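/- arXiv:2210.01601 — 7 statements merged into one kernel-verified Lean document; each statement's English description precedes it below -/
import Mathlib

section
/- Let r, q, n be positive integers. For each i ∈ Fin r let α_i > 0 be a real number, let A_i be an n×n complex matrix, and let U_i be an (α_i, q, 0) block-encoding of A_i. Set α = sqrt(Σ_{i ∈ Fin r} α_i²), and let V be an r×r unitary complex matrix whose first column satisfies V i 0 = α_i / α for all i ∈ Fin r. Let D be the block-diagonal matrix indexed by Fin r × (Fin 2^q × Fin n) with entries D (i,(a,x)) (i',(a',x')) = (if i = i' then U_i (a,x) (a',x') else 0), and let V ⊗ I denote the Kronecker product of V with the identity matrix on Fin 2^q × Fin n. Then W := D · (V ⊗ I) is unitary, and for every i ∈ Fin r and all x, y ∈ Fin n one has A_i x y = α · W (i,(0,x)) (0,(0,y)). (Equivalently, after swapping the Fin r and Fin 2^q registers, W is an (α, q + log r, 0) block-encoding of the vertically stacked matrix A whose (i,x)-th row is the x-th row of A_i.) -/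
open Matrix

/-- Lemma `lem:block-encoding construction`: vertically stacking block-encodings.
If `U i` is an `(αi i, q, 0)` block-encoding of `A i` for each `i`, `V` is unitary with
first column `αi i / α` where `α = sqrt (∑ αi i ^ 2)`, `D` is the block-diagonal matrix of
the `U i`, then `W = D * (V ⊗ I)` is unitary and is an `(α, q + log r, 0)` block-encoding
of the vertically stacked matrix, i.e. `A i x y = α * W (i,(0,x)) (0,(0,y))`. -/
theorem stacked_block_encoding
    (r q n : ℕ) (hr : 0 < r) (hq : 0 < q) (hn : 0 < n)
    (αi : Fin r → ℝ) (hαi : ∀ i, 0 < αi i)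
    (A : Fin r → Matrix (Fin n) (Fin n) ℂ)
    (U : Fin r → Matrix (Fin (2 ^ q) × Fin n) (Fin (2 ^ q) × Fin n) ℂ)
    (hU : ∀ i, U i ∈ Matrix.unitaryGroup (Fin (2 ^ q) × Fin n) ℂ)
    (hBE : ∀ i (x y : Fin n), A i x y = (αi i : ℂ) * U i (0, x) (0, y))
    (α : ℝ) (hα : α = Real.sqrt (∑ i, αi i ^ 2))
    (V : Matrix (Fin r) (Fin r) ℂ)
    (hV : V ∈ Matrix.unitaryGroup (Fin r) ℂ)
    (hVcol : ∀ i : Fin r, V i ⟨0, hr⟩ = ((αi i / α : ℝ) : ℂ))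
    (D : Matrix (Fin r × (Fin (2 ^ q) × Fin n)) (Fin r × (Fin (2 ^ q) × Fin n)) ℂ)
    (hD : ∀ (i i' : Fin r) (a a' : Fin (2 ^ q)) (x x' : Fin n),
      D (i, (a, x)) (i', (a', x')) = if i = i' then U i (a, x) (a', x') else 0)
    (VI : Matrix (Fin r × (Fin (2 ^ q) × Fin n)) (Fin r × (Fin (2 ^ q) × Fin n)) ℂ)
    (hVI : ∀ (i i' : Fin r) (j j' : Fin (2 ^ q) × Fin n),
      VI (i, j) (i', j') = V i i' * (if j = j' then 1 else 0)) :
    D * VI ∈ Matrix.unitaryGroup (Fin r × (Fin (2 ^ q) × Fin n)) ℂ ∧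
      ∀ (i : Fin r) (x y : Fin n),
        A i x y = (α : ℂ) * (D * VI) (i, (0, x)) (⟨0, hr⟩, (0, y)) := by
  classical
  have hα0 : 0 < α := by
    rw [hα]
    apply Real.sqrt_pos.mpr
    apply Finset.sum_pos (fun i _ => pow_pos (hαi i) 2)
    exact ⟨⟨0, hr⟩, Finset.mem_univ _⟩
  set e : (Fin r × (Fin (2 ^ q) × Fin n)) ≃ ((Fin (2 ^ q) × Fin n) × Fin r) :=
    Equiv.prodComm _ _ with he
  have hDeq : D = (Matrix.blockDiagonal U).submatrix e e := by
    ext ⟨i, a, x⟩ ⟨i', a', x'⟩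
    simp [Matrix.submatrix_apply, Matrix.blockDiagonal_apply, hD, he]
  have hVIeq : VI = Matrix.kroneckerMap (· * ·) V (1 : Matrix (Fin (2 ^ q) × Fin n) (Fin (2 ^ q) × Fin n) ℂ) := by
    ext ⟨i, j⟩ ⟨i', j'⟩
    simp [hVI, Matrix.kroneckerMap_apply, Matrix.one_apply]
  have hDu : D ∈ Matrix.unitaryGroup (Fin r × (Fin (2 ^ q) × Fin n)) ℂ := by
    rw [Matrix.mem_unitaryGroup_iff, hDeq]
    have : (star ((Matrix.blockDiagonal U).submatrix e e)) =
        ((Matrix.blockDiagonal U)ᴴ).submatrix e e := by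
      simp [Matrix.star_eq_conjTranspose, Matrix.conjTranspose_submatrix]
    rw [this, Matrix.submatrix_mul_equiv, Matrix.blockDiagonal_conjTranspose,
      ← Matrix.blockDiagonal_mul]
    have h1 : (fun k => U k * (U k)ᴴ) = (1 : Fin r → Matrix _ _ ℂ) := by
      funext k
      exact Matrix.mem_unitaryGroup_iff.mp (hU k)
    rw [h1, Matrix.blockDiagonal_one, Matrix.submatrix_one_equiv]
  have hVIu : VI ∈ Matrix.unitaryGroup (Fin r × (Fin (2 ^ q) × Fin n)) ℂ := by
    rw [Matrix.mem_unitaryGroup_iff, hVIeq]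
    have hst : star (Matrix.kroneckerMap (· * ·) V (1 : Matrix (Fin (2 ^ q) × Fin n) (Fin (2 ^ q) × Fin n) ℂ)) =
        Matrix.kroneckerMap (· * ·) (star V) (1 : Matrix (Fin (2 ^ q) × Fin n) (Fin (2 ^ q) × Fin n) ℂ) := by
      ext ⟨i, j⟩ ⟨i', j'⟩
      by_cases h : j = j' <;>
        simp [h, Matrix.star_apply, Matrix.kroneckerMap_apply, Matrix.one_apply,
          Matrix.star_eq_conjTranspose, Matrix.conjTranspose_apply, eq_comm]
    rw [hst, ← Matrix.mul_kronecker_mul, Matrix.mem_unitaryGroup_iff.mp hV, one_mul,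
      Matrix.one_kronecker_one]
  refine ⟨mul_mem hDu hVIu, ?_⟩
  intro i x y
  have hent : (D * VI) (i, (0, x)) (⟨0, hr⟩, (0, y))
      = U i (0, x) (0, y) * ((αi i / α : ℝ) : ℂ) := by
    rw [Matrix.mul_apply, Fintype.sum_prod_type]
    rw [Finset.sum_eq_single i]
    · rw [Finset.sum_eq_single ((0 : Fin (2 ^ q)), y)]
      · rw [hD, hVI, hVcol]; simp
      · intro b _ hb
        rw [hVI]
        simp [hb]
      · simp
    · intro b _ hb
      rw [Finset.sum_eq_zero]
      intro l _
      obtain ⟨la, lx⟩ := l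
      rw [hD]
      simp [Ne.symm hb]
    · simp
  rw [hent, hBE]
  have hne : (α : ℂ) ≠ 0 := by exact_mod_cast hα0.ne'
  push_cast
  field_simp
end

section
/- Let r, q, n be positive integers. For each i ∈ Fin r let α_i > 0 be a real number, let A_i be an n×n complex matrix, and let U_i be an (α_i, q, 0) block-encoding of A_i. Set α = Σ_{i ∈ Fin r} α_i, and let V be an r×r unitary complex matrix whose first column satisfies V i 0 = sqrt(α_i / α) for all i ∈ Fin r. Let D be the block-diagonal matrix indexed by Fin r × (Fin 2^q × Fin n) with entries D (i,(a,x)) (i',(a',x')) = (if i = i' then U_i (a,x) (a',x') else 0). Then W := (Vᴴ ⊗ I) · D · (V ⊗ I) is unitary (where Vᴴ is the conjugate transpose of V and ⊗ I denotes the Kronecker product with the identity on Fin 2^q × Fin n), and for all x, y ∈ Fin n one has (Σ_{i ∈ Fin r} A_i) x y = α · W (0,(0,x)) (0,(0,y)); that is, W is an (α, q + log r, 0) block-encoding of A_0 + ⋯ + A_{r−1}. -/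
open Matrix

/-- Lemma `lem:block-encoding construction2`: linear combination of block-encodings.
If `U i` is an `(αi i, q, 0)` block-encoding of `A i` for each `i`, `V` is unitary with
first column `sqrt (αi i / α)` where `α = ∑ αi i`, `D` is the block-diagonal matrix of
the `U i`, then `W = (Vᴴ ⊗ I) * D * (V ⊗ I)` is unitary and is an `(α, q + log r, 0)`
block-encoding of `A 0 + ⋯ + A (r-1)`. -/
theorem sum_block_encoding
    (r q n : ℕ) (hr : 0 < r) (hq : 0 < q) (hn : 0 < n)
    (αi : Fin r → ℝ) (hαi : ∀ i, 0 < αi i)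
    (A : Fin r → Matrix (Fin n) (Fin n) ℂ)
    (U : Fin r → Matrix (Fin (2 ^ q) × Fin n) (Fin (2 ^ q) × Fin n) ℂ)
    (hU : ∀ i, U i ∈ Matrix.unitaryGroup (Fin (2 ^ q) × Fin n) ℂ)
    (hBE : ∀ i (x y : Fin n), A i x y = (αi i : ℂ) * U i (0, x) (0, y))
    (α : ℝ) (hα : α = ∑ i, αi i)
    (V : Matrix (Fin r) (Fin r) ℂ)
    (hV : V ∈ Matrix.unitaryGroup (Fin r) ℂ)
    (hVcol : ∀ i : Fin r, V i ⟨0, hr⟩ = ((Real.sqrt (αi i / α) : ℝ) : ℂ))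
    (D : Matrix (Fin r × (Fin (2 ^ q) × Fin n)) (Fin r × (Fin (2 ^ q) × Fin n)) ℂ)
    (hD : ∀ (i i' : Fin r) (a a' : Fin (2 ^ q)) (x x' : Fin n),
      D (i, (a, x)) (i', (a', x')) = if i = i' then U i (a, x) (a', x') else 0)
    (VI : Matrix (Fin r × (Fin (2 ^ q) × Fin n)) (Fin r × (Fin (2 ^ q) × Fin n)) ℂ)
    (hVI : ∀ (i i' : Fin r) (j j' : Fin (2 ^ q) × Fin n),
      VI (i, j) (i', j') = V i i' * (if j = j' then 1 else 0)) :
    VIᴴ * D * VI ∈ Matrix.unitaryGroup (Fin r × (Fin (2 ^ q) × Fin n)) ℂ ∧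
      ∀ (x y : Fin n),
        (∑ i, A i) x y = (α : ℂ) * (VIᴴ * D * VI) (⟨0, hr⟩, (0, x)) (⟨0, hr⟩, (0, y)) := by
  have hαpos : 0 < α := by
    rw [hα]
    exact Finset.sum_pos (fun i _ => hαi i) ⟨⟨0, hr⟩, Finset.mem_univ _⟩
  -- VI is unitary
  have hVImem : VI ∈ Matrix.unitaryGroup (Fin r × (Fin (2 ^ q) × Fin n)) ℂ := by
    rw [Matrix.mem_unitaryGroup_iff']
    have hV1 : Vᴴ * V = 1 := (Matrix.mem_unitaryGroup_iff').mp hV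
    ext ⟨i, j⟩ ⟨i', j'⟩
    have := congrFun (congrFun hV1 i) i'
    rw [Matrix.one_apply] at this
    simp only [Matrix.mul_apply, Matrix.conjTranspose_apply] at this ⊢
    rw [Fintype.sum_prod_type]
    simp only [hVI, Matrix.star_apply, star_mul']
    by_cases h : j = j'
    · subst h
      simp only [Matrix.one_apply, Prod.mk.injEq, and_true]
      rw [← this]
      refine Finset.sum_congr rfl fun k _ => ?_
      rw [Finset.sum_eq_single j]
      · simp
      · intro b _ hb; simp [hb]
      · simp
    · simp only [Matrix.one_apply, Prod.mk.injEq, h, and_false, if_false]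
      refine Finset.sum_eq_zero fun k _ => Finset.sum_eq_zero fun l _ => ?_
      rcases eq_or_ne l j with rfl | hl
      · simp [h]
      · simp [hl]
  -- D is unitary
  have hDmem : D ∈ Matrix.unitaryGroup (Fin r × (Fin (2 ^ q) × Fin n)) ℂ := by
    rw [Matrix.mem_unitaryGroup_iff']
    ext ⟨i, a, x⟩ ⟨i', a', x'⟩
    have hUi := (Matrix.mem_unitaryGroup_iff').mp (hU i)
    have hU1 := congrFun (congrFun hUi (a, x)) (a', x')
    simp only [Matrix.one_apply, Prod.mk.injEq, Matrix.mul_apply,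
      Matrix.star_apply] at hU1
    simp only [Matrix.mul_apply, Matrix.star_apply]
    rw [Fintype.sum_prod_type]
    by_cases h : i = i'
    · subst h
      rw [Finset.sum_eq_single i]
      · simp only [Matrix.one_apply, Prod.mk.injEq, eq_self_iff_true, true_and]
        rw [← hU1]
        refine Finset.sum_congr rfl fun ⟨b, z⟩ _ => ?_
        rw [hD, hD, if_pos rfl, if_pos rfl]
      · intro k _ hk
        refine Finset.sum_eq_zero fun ⟨b, z⟩ _ => ?_
        rw [hD, if_neg hk]
        simp
      · simp
    · simp only [Matrix.one_apply, Prod.mk.injEq, h, false_and, if_false]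
      refine Finset.sum_eq_zero fun k _ => Finset.sum_eq_zero fun ⟨b, z⟩ _ => ?_
      rw [hD, hD]
      rcases eq_or_ne k i with rfl | hk
      · rw [if_neg h, mul_zero]
      · rw [if_neg hk]
        simp
  refine ⟨mul_mem (mul_mem (Unitary.star_mem hVImem) hDmem) hVImem, fun x y => ?_⟩
  -- entry computation
  have h1 : ∀ (k : Fin r) (l : Fin (2 ^ q) × Fin n),
      (VIᴴ * D) (⟨0, hr⟩, (0, x)) (k, l) = star (V k ⟨0, hr⟩) * U k (0, x) l := by
    rintro k ⟨b, z⟩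
    rw [Matrix.mul_apply, Fintype.sum_prod_type]
    rw [Finset.sum_eq_single k]
    · rw [Finset.sum_eq_single ((0 : Fin (2 ^ q)), x)]
      · rw [Matrix.conjTranspose_apply, hVI, hD, if_pos rfl, if_pos rfl, mul_one]
      · rintro ⟨c, w⟩ _ hc
        rw [Matrix.conjTranspose_apply, hVI, if_neg hc, mul_zero, star_zero, zero_mul]
      · simp
    · intro m _ hm
      refine Finset.sum_eq_zero fun ⟨c, w⟩ _ => ?_
      rw [hD, if_neg hm, mul_zero]
    · simp
  have h2 : (VIᴴ * D * VI) (⟨0, hr⟩, (0, x)) (⟨0, hr⟩, (0, y))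
      = ∑ k : Fin r, star (V k ⟨0, hr⟩) * U k (0, x) (0, y) * V k ⟨0, hr⟩ := by
    rw [Matrix.mul_apply, Fintype.sum_prod_type]
    refine Finset.sum_congr rfl fun k _ => ?_
    rw [Finset.sum_eq_single ((0 : Fin (2 ^ q)), y)]
    · rw [h1, hVI, if_pos rfl, mul_one]
    · rintro ⟨c, w⟩ _ hc
      rw [hVI, if_neg hc, mul_zero, mul_zero]
    · simp
  have h3 : ∀ k : Fin r, star (V k ⟨0, hr⟩) * U k (0, x) (0, y) * V k ⟨0, hr⟩
      = ((αi k / α : ℝ) : ℂ) * U k (0, x) (0, y) := by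
    intro k
    rw [hVcol, Complex.star_def, Complex.conj_ofReal, mul_right_comm,
      ← Complex.ofReal_mul, Real.mul_self_sqrt (div_nonneg (hαi k).le hαpos.le)]
  rw [h2, Finset.mul_sum, Matrix.sum_apply]
  refine Finset.sum_congr rfl fun k _ => ?_
  rw [h3, hBE, ← mul_assoc, ← Complex.ofReal_mul, mul_div_cancel₀ _ (ne_of_gt hαpos)]
end

section
/- Let n be a positive integer, α > 0 a real number, and d : Fin n → ℝ a function with |d i| ≤ α for all i. Let U and V be n×n real orthogonal matrices. Define the diagonal matrices Dα = diagonal(fun i => d i / α) and S = diagonal(fun i => Real.sqrt (1 − (d i / α)^2)), and define the 2n×2n real matrix M = (fromBlocks U 0 0 1) * (fromBlocks Dα S S (−Dα)) * (fromBlocks Vᵀ 0 0 1), where fromBlocks builds a block matrix from four n×n blocks and Vᵀ is the transpose of V. Then M is orthogonal (i.e., Mᵀ * M = 1), and its top-left n×n block equals α⁻¹ • (U * diagonal(d) * Vᵀ); that is, M is an (α, 1, 0) block-encoding of the matrix with singular value decomposition U · diagonal(d) · Vᵀ. -/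
open Matrix

/-- Equation `(block-encoding by SVD)`: given an SVD `U * diagonal d * Vᵀ` with singular
values bounded by `α`, the displayed 2×2-block matrix `M` is orthogonal and its top-left
block is `α⁻¹ • (U * diagonal d * Vᵀ)`, i.e. `M` is an `(α, 1, 0)` block-encoding. -/
theorem block_encoding_by_svd
    (n : ℕ) (hn : 0 < n) (α : ℝ) (hα : 0 < α)
    (d : Fin n → ℝ) (hd : ∀ i, |d i| ≤ α)
    (U V : Matrix (Fin n) (Fin n) ℝ)
    (hU : Uᵀ * U = 1) (hV : Vᵀ * V = 1)
    (Dα S : Matrix (Fin n) (Fin n) ℝ)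
    (hDα : Dα = Matrix.diagonal fun i => d i / α)
    (hS : S = Matrix.diagonal fun i => Real.sqrt (1 - (d i / α) ^ 2))
    (M : Matrix (Fin n ⊕ Fin n) (Fin n ⊕ Fin n) ℝ)
    (hM : M = Matrix.fromBlocks U 0 0 1 * Matrix.fromBlocks Dα S S (-Dα) *
      Matrix.fromBlocks Vᵀ 0 0 1) :
    Mᵀ * M = 1 ∧ M.toBlocks₁₁ = α⁻¹ • (U * Matrix.diagonal d * Vᵀ) := by
  have hVV : V * Vᵀ = 1 := mul_eq_one_comm.mp hV
  have hDt : Dαᵀ = Dα := by rw [hDα]; exact Matrix.diagonal_transpose _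
  have hSt : Sᵀ = S := by rw [hS]; exact Matrix.diagonal_transpose _
  have hsq : Dα * Dα + S * S = 1 := by
    rw [hDα, hS, Matrix.diagonal_mul_diagonal, Matrix.diagonal_mul_diagonal,
      Matrix.diagonal_add, ← Matrix.diagonal_one]
    have key : (fun i => d i / α * (d i / α) +
        Real.sqrt (1 - (d i / α) ^ 2) * Real.sqrt (1 - (d i / α) ^ 2)) = fun _ => (1 : ℝ) := by
      funext i
      have h1 : (d i / α) ^ 2 ≤ 1 := by
        rw [div_pow, div_le_one (by positivity)]
        calc d i ^ 2 = |d i| ^ 2 := (sq_abs _).symm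
          _ ≤ α ^ 2 := pow_le_pow_left₀ (abs_nonneg _) (hd i) 2
      have h2 : Real.sqrt (1 - (d i / α) ^ 2) ^ 2 = 1 - (d i / α) ^ 2 :=
        Real.sq_sqrt (sub_nonneg.mpr h1)
      linear_combination h2
    rw [key]
  have hcomm : Dα * S = S * Dα := by
    rw [hDα, hS, Matrix.diagonal_mul_diagonal, Matrix.diagonal_mul_diagonal]
    have : (fun i => d i / α * Real.sqrt (1 - (d i / α) ^ 2)) =
        fun i => Real.sqrt (1 - (d i / α) ^ 2) * (d i / α) :=
      funext fun i => mul_comm _ _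
    rw [this]
  have hB : (Matrix.fromBlocks Dα S S (-Dα))ᵀ * Matrix.fromBlocks Dα S S (-Dα) = 1 := by
    rw [Matrix.fromBlocks_transpose, Matrix.transpose_neg, hDt, hSt,
      Matrix.fromBlocks_multiply, ← Matrix.fromBlocks_one]
    rw [Matrix.fromBlocks_inj]
    refine ⟨hsq, ?_, ?_, ?_⟩
    · rw [mul_neg, hcomm, add_neg_cancel]
    · rw [neg_mul, hcomm, add_neg_cancel]
    · rw [neg_mul_neg, add_comm]; exact hsq
  have hA : (Matrix.fromBlocks U 0 0 (1 : Matrix (Fin n) (Fin n) ℝ))ᵀ *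
      Matrix.fromBlocks U 0 0 1 = 1 := by
    rw [Matrix.fromBlocks_transpose, Matrix.fromBlocks_multiply]
    simp [hU, Matrix.fromBlocks_one]
  have hC : (Matrix.fromBlocks Vᵀ 0 0 (1 : Matrix (Fin n) (Fin n) ℝ))ᵀ *
      Matrix.fromBlocks Vᵀ 0 0 1 = 1 := by
    rw [Matrix.fromBlocks_transpose, Matrix.fromBlocks_multiply]
    simp [hVV, Matrix.fromBlocks_one]
  constructor
  · rw [hM]
    calc (Matrix.fromBlocks U 0 0 1 * Matrix.fromBlocks Dα S S (-Dα) *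
            Matrix.fromBlocks Vᵀ 0 0 1)ᵀ *
          (Matrix.fromBlocks U 0 0 1 * Matrix.fromBlocks Dα S S (-Dα) *
            Matrix.fromBlocks Vᵀ 0 0 1)
        = (Matrix.fromBlocks Vᵀ 0 0 1)ᵀ *
            ((Matrix.fromBlocks Dα S S (-Dα))ᵀ *
              ((Matrix.fromBlocks U 0 0 1)ᵀ * Matrix.fromBlocks U 0 0 1) *
              Matrix.fromBlocks Dα S S (-Dα)) *
            Matrix.fromBlocks Vᵀ 0 0 1 := by
          simp only [Matrix.transpose_mul, Matrix.mul_assoc]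
      _ = 1 := by rw [hA, Matrix.mul_one, hB, Matrix.mul_one, hC]
  · rw [hM, Matrix.fromBlocks_multiply, Matrix.fromBlocks_multiply]
    simp only [Matrix.toBlocks_fromBlocks₁₁, Matrix.mul_zero, Matrix.zero_mul,
      Matrix.mul_one, Matrix.one_mul, add_zero, zero_add]
    have hdiag : Matrix.diagonal (fun i => d i / α) = α⁻¹ • Matrix.diagonal d := by
      ext i j
      rcases eq_or_ne i j with h | h
      · subst h; simp [div_eq_inv_mul]
      · simp [Matrix.diagonal_apply_ne _ h, h]
    rw [hDα, hdiag, Matrix.mul_smul, Matrix.smul_mul]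
end

section
/- Let H be the 2×2 complex matrix H = (Real.sqrt 2)⁻¹ • !![1, 1; 1, −1] (the Hadamard matrix, viewed over ℂ). Then the matrix exponential of ((π/2) : ℂ) • Complex.I • (1 − H) equals H, i.e., exp((π/2) • i • (I₂ − H)) = H, where 1 = I₂ is the 2×2 identity matrix. -/
open Matrix

lemma exp_idem_aux (P : Matrix (Fin 2) (Fin 2) ℂ) (hP : P * P = P) (c : ℂ) :
    NormedSpace.exp (c • P) = 1 + (Complex.exp c - 1) • P := by
  letI : SeminormedRing (Matrix (Fin 2) (Fin 2) ℂ) := Matrix.linftyOpSemiNormedRing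
  letI : NormedRing (Matrix (Fin 2) (Fin 2) ℂ) := Matrix.linftyOpNormedRing
  letI : NormedAlgebra ℂ (Matrix (Fin 2) (Fin 2) ℂ) := Matrix.linftyOpNormedAlgebra
  have hpow : ∀ n : ℕ, P ^ (n + 1) = P := by
    intro n
    induction n with
    | zero => simp
    | succ n ih => rw [pow_succ, ih, hP]
  have hsum : Summable (fun n : ℕ => ((n.factorial : ℕ) : ℂ)⁻¹ • (c • P) ^ n) :=
    NormedSpace.expSeries_summable' _
  simp only [NormedSpace.exp_eq_tsum ℂ]
  rw [Summable.tsum_eq_zero_add hsum]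
  have h1 : ∀ n : ℕ, ((Nat.factorial (n + 1) : ℕ) : ℂ)⁻¹ • (c • P) ^ (n + 1)
      = (((Nat.factorial (n + 1) : ℕ) : ℂ)⁻¹ * c ^ (n + 1)) • P := by
    intro n
    rw [smul_pow, hpow, smul_smul]
  simp only [h1, pow_zero, Nat.factorial_zero, Nat.cast_one, inv_one, one_smul]
  have hsc : Summable (fun n : ℕ => ((Nat.factorial (n + 1) : ℕ) : ℂ)⁻¹ * c ^ (n + 1)) := by
    have h := (NormedSpace.expSeries_summable' (𝕂 := ℂ) c).comp_injective
      (add_left_injective 1)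
    simpa [Function.comp_def, smul_eq_mul] using h
  have hall : Summable (fun n : ℕ => ((Nat.factorial n : ℕ) : ℂ)⁻¹ * c ^ n) := by
    simpa [smul_eq_mul] using NormedSpace.expSeries_summable' (𝕂 := ℂ) c
  have hexp : Complex.exp c = ∑' n : ℕ, ((Nat.factorial n : ℕ) : ℂ)⁻¹ * c ^ n := by
    rw [Complex.exp_eq_exp_ℂ, NormedSpace.exp_eq_tsum ℂ]
    simp [smul_eq_mul]
  have hsc' : (∑' n : ℕ, ((Nat.factorial (n + 1) : ℕ) : ℂ)⁻¹ * c ^ (n + 1))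
      = Complex.exp c - 1 := by
    rw [hexp, Summable.tsum_eq_zero_add hall]
    simp
  rw [Summable.tsum_smul_const, hsc']
  exact hsc

/-- The Hadamard matrix decomposition `H₂ = exp(i (π/2) (I₂ - H₂))` used in the proof
of Proposition `prop:classical-HS`. -/
theorem hadamard_exp :
    NormedSpace.exp
        (((Real.pi / 2 : ℝ) : ℂ) • Complex.I •
          ((1 : Matrix (Fin 2) (Fin 2) ℂ) -
            ((Real.sqrt 2 : ℂ))⁻¹ • !![1, 1; 1, -1])) =
      ((Real.sqrt 2 : ℂ))⁻¹ • !![1, 1; 1, -1] := by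
  set H : Matrix (Fin 2) (Fin 2) ℂ := ((Real.sqrt 2 : ℂ))⁻¹ • !![1, 1; 1, -1] with hH
  have h2 : ((Real.sqrt 2 : ℂ)) * ((Real.sqrt 2 : ℂ)) = 2 := by
    norm_cast
    rw [Real.mul_self_sqrt (by norm_num)]
  have hs : ((Real.sqrt 2 : ℂ))⁻¹ * ((Real.sqrt 2 : ℂ))⁻¹ = (2 : ℂ)⁻¹ := by
    rw [← mul_inv, h2]
  have hHH : H * H = 1 := by
    rw [hH, smul_mul_smul_comm, hs]
    ext i j
    fin_cases i <;> fin_cases j <;>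
      simp [Matrix.mul_apply, Fin.sum_univ_two, Matrix.one_apply] <;> ring
  set P : Matrix (Fin 2) (Fin 2) ℂ := (2 : ℂ)⁻¹ • (1 - H) with hPdef
  have hsq : (1 - H) * (1 - H) = (1 - H) + (1 - H) := by
    simp only [sub_mul, mul_sub, hHH, mul_one, one_mul]
    abel
  have hP : P * P = P := by
    rw [hPdef, smul_mul_smul_comm, hsq, smul_add]
    module
  have hM : (((Real.pi / 2 : ℝ) : ℂ) • Complex.I •
      ((1 : Matrix (Fin 2) (Fin 2) ℂ) - H)) = ((Real.pi : ℂ) * Complex.I) • P := by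
    rw [hPdef, smul_smul, smul_smul]
    congr 1
    push_cast
    ring
  rw [hM, exp_idem_aux P hP, Complex.exp_pi_mul_I, hPdef, smul_smul]
  module
end

section
/- Let d be a positive integer and let H be the 2×2 Hadamard matrix over ℂ. Define the matrix Hd indexed by (Fin d → Fin 2) × (Fin d → Fin 2) by Hd x y = Π_{j ∈ Fin d} H (x j) (y j) (the d-fold tensor power of H), and define the matrix L on the same index set by L x y = Σ_{j ∈ Fin d} ((1 − H) (x j) (y j)) · Π_{k ≠ j} (if x k = y k then 1 else 0) (i.e., L = Σ_j I^{⊗(j−1)} ⊗ (I₂ − H) ⊗ I^{⊗(d−j)}). Then the matrix exponential of ((π/2) : ℂ) • Complex.I • L equals Hd, i.e., H^{⊗d} = exp(i·(π/2)·L). -/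
open Matrix

section AuxIdem

open NormedSpace

set_option maxHeartbeats 1000000 in
/-- Exponential of a scalar multiple of an idempotent element. -/
lemma exp_smul_idem {A : Type*} [NormedRing A] [NormedAlgebra ℂ A] [CompleteSpace A]
    (P : A) (hP : P * P = P) (z : ℂ) :
    exp (z • P) = 1 + (Complex.exp z - 1) • P := by
  have hPn : ∀ n : ℕ, P ^ (n + 1) = P := by
    intro n
    induction n with
    | zero => simp
    | succ n ih => rw [pow_succ, ih, hP]
  have hsum : Summable fun n : ℕ => ((Nat.factorial n : ℂ))⁻¹ • (z • P) ^ n :=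
    expSeries_summable' (𝕂 := ℂ) (z • P)
  have hzsum : Summable fun n : ℕ => ((Nat.factorial n : ℂ))⁻¹ * z ^ n := by
    simpa [smul_eq_mul] using expSeries_summable' (𝕂 := ℂ) z
  have hzsum1 : Summable fun n : ℕ => ((Nat.factorial (n + 1) : ℂ))⁻¹ * z ^ (n + 1) :=
    (summable_nat_add_iff 1).mpr hzsum
  have hz : ∑' n : ℕ, ((Nat.factorial (n + 1) : ℂ))⁻¹ * z ^ (n + 1) = Complex.exp z - 1 := by
    have h0 := Summable.tsum_eq_zero_add hzsum
    have hce : Complex.exp z = ∑' n : ℕ, ((Nat.factorial n : ℂ))⁻¹ * z ^ n := by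
      rw [Complex.exp_eq_exp_ℂ, exp_eq_tsum ℂ]
      simp [smul_eq_mul]
    rw [← hce] at h0
    simp only [Nat.factorial_zero, pow_zero, Nat.cast_one, inv_one, mul_one] at h0
    rw [h0]; ring
  simp only [exp_eq_tsum ℂ]
  rw [Summable.tsum_eq_zero_add hsum]
  have hterm : ∀ n : ℕ, ((Nat.factorial (n + 1) : ℂ))⁻¹ • (z • P) ^ (n + 1)
      = (((Nat.factorial (n + 1) : ℂ))⁻¹ * z ^ (n + 1)) • P := by
    intro n
    rw [smul_pow, hPn, smul_smul]
  simp only [hterm]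
  rw [Summable.tsum_smul_const hzsum1, hz]
  simp

end AuxIdem

namespace HadamardAux

variable {d : ℕ}

/-- The `d`-fold tensor product of `2 × 2` matrices, entrywise. -/
def W (f : Fin d → Matrix (Fin 2) (Fin 2) ℂ) :
    Matrix (Fin d → Fin 2) (Fin d → Fin 2) ℂ :=
  Matrix.of fun x y => ∏ j, f j (x j) (y j)

lemma W_apply (f : Fin d → Matrix (Fin 2) (Fin 2) ℂ) (x y : Fin d → Fin 2) :
    W f x y = ∏ j, f j (x j) (y j) := rfl

lemma W_one : W (fun _ : Fin d => (1 : Matrix (Fin 2) (Fin 2) ℂ)) = 1 := by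
  ext x y
  by_cases h : x = y
  · subst h
    simp [W_apply, Matrix.one_apply]
  · rw [W_apply, Matrix.one_apply_ne h]
    obtain ⟨j, hj⟩ := Function.ne_iff.mp h
    exact Finset.prod_eq_zero (Finset.mem_univ j) (by simp [Matrix.one_apply, hj])

lemma W_mul (f g : Fin d → Matrix (Fin 2) (Fin 2) ℂ) :
    W f * W g = W (fun j => f j * g j) := by
  ext x y
  simp only [Matrix.mul_apply, W_apply]
  rw [Finset.prod_univ_sum, Fintype.piFinset_univ]
  exact Finset.sum_congr rfl fun z _ => (Finset.prod_mul_distrib).symm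

end HadamardAux

open HadamardAux

/-- `H^{⊗d} = exp(i (π/2) L)` where `L = ∑_j I^{⊗(j-1)} ⊗ (I₂ - H) ⊗ I^{⊗(d-j)}`, as used
in the proof of Proposition `prop:classical-HS`. -/
theorem hadamard_tensor_pow_exp
    (d : ℕ) (hd : 0 < d)
    (H : Matrix (Fin 2) (Fin 2) ℂ)
    (hH : H = ((Real.sqrt 2 : ℂ))⁻¹ • !![1, 1; 1, -1])
    (Hd : Matrix (Fin d → Fin 2) (Fin d → Fin 2) ℂ)
    (hHd : ∀ x y, Hd x y = ∏ j, H (x j) (y j))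
    (L : Matrix (Fin d → Fin 2) (Fin d → Fin 2) ℂ)
    (hL : ∀ x y, L x y = ∑ j, ((1 : Matrix (Fin 2) (Fin 2) ℂ) - H) (x j) (y j) *
      ∏ k ∈ Finset.univ.erase j, (if x k = y k then (1 : ℂ) else 0)) :
    NormedSpace.exp (((Real.pi / 2 : ℝ) : ℂ) • Complex.I • L) = Hd := by
  classical
  -- basic `H` fact: `H` is an involution
  have hH2 : H * H = 1 := by
    have h2 : ((Real.sqrt 2 : ℝ) : ℂ) * ((Real.sqrt 2 : ℝ) : ℂ) = 2 := by
      rw [← Complex.ofReal_mul, Real.mul_self_sqrt (by norm_num)]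
      norm_num
    rw [hH, Matrix.smul_mul, Matrix.mul_smul, smul_smul, ← mul_inv, h2]
    ext i j
    fin_cases i <;> fin_cases j <;>
      simp [Matrix.mul_apply, Fin.sum_univ_two, Matrix.one_apply] <;> norm_num
  set e : Fin d → Fin d → Matrix (Fin 2) (Fin 2) ℂ :=
    fun j k => if k = j then H else 1 with he
  set M : Fin d → Matrix (Fin d → Fin 2) (Fin d → Fin 2) ℂ := fun j => W (e j) with hM
  have hMM : ∀ j l, Commute (M j) (M l) := by
    intro j l
    show W (e j) * W (e l) = W (e l) * W (e j)
    rw [W_mul, W_mul]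
    exact congrArg W (funext fun k => by
      by_cases h1 : k = j <;> by_cases h2 : k = l <;> simp [he, h1, h2])
  have hM2 : ∀ j, M j * M j = 1 := by
    intro j
    show W (e j) * W (e j) = 1
    rw [W_mul, ← W_one]
    exact congrArg W (funext fun k => by
      by_cases h1 : k = j <;> simp [he, h1, hH2])
  -- rewrite L as a sum
  have hLsum : L = ∑ j, ((1 : Matrix (Fin d → Fin 2) (Fin d → Fin 2) ℂ) - M j) := by
    ext x y
    rw [hL, Matrix.sum_apply]
    refine Finset.sum_congr rfl fun j _ => ?_
    have hone : (1 : Matrix (Fin d → Fin 2) (Fin d → Fin 2) ℂ) x y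
        = ∏ k, (1 : Matrix (Fin 2) (Fin 2) ℂ) (x k) (y k) := by
      rw [← W_one, W_apply]
    have hMapply : M j x y = H (x j) (y j) *
        ∏ k ∈ Finset.univ.erase j, (1 : Matrix (Fin 2) (Fin 2) ℂ) (x k) (y k) := by
      show (∏ k, (e j k) (x k) (y k)) = _
      rw [← Finset.mul_prod_erase Finset.univ _ (Finset.mem_univ j)]
      simp only [he, if_pos rfl]
      congr 1
      exact Finset.prod_congr rfl fun k hk => by
        rw [if_neg (Finset.mem_erase.mp hk).1]
    have hone' : (1 : Matrix (Fin d → Fin 2) (Fin d → Fin 2) ℂ) x y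
        = (1 : Matrix (Fin 2) (Fin 2) ℂ) (x j) (y j) *
          ∏ k ∈ Finset.univ.erase j, (1 : Matrix (Fin 2) (Fin 2) ℂ) (x k) (y k) := by
      rw [hone, ← Finset.mul_prod_erase Finset.univ _ (Finset.mem_univ j)]
    conv_rhs => rw [Matrix.sub_apply, hone', hMapply, ← sub_mul]
    simp [Matrix.sub_apply, Matrix.one_apply]
  -- install the norm on big matrices
  letI : SeminormedRing (Matrix (Fin d → Fin 2) (Fin d → Fin 2) ℂ) :=
    Matrix.linftyOpSemiNormedRing
  letI : NormedRing (Matrix (Fin d → Fin 2) (Fin d → Fin 2) ℂ) :=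
    Matrix.linftyOpNormedRing
  letI : NormedAlgebra ℂ (Matrix (Fin d → Fin 2) (Fin d → Fin 2) ℂ) :=
    Matrix.linftyOpNormedAlgebra
  letI : NormedAlgebra ℚ (Matrix (Fin d → Fin 2) (Fin d → Fin 2) ℂ) :=
    NormedAlgebra.restrictScalars ℚ ℂ _
  set c : ℂ := ((Real.pi / 2 : ℝ) : ℂ) * Complex.I with hc
  -- exp of a single term
  have hexp_single : ∀ j, NormedSpace.exp (c • (1 - M j)) = M j := by
    intro j
    set N : Matrix (Fin d → Fin 2) (Fin d → Fin 2) ℂ := 1 - M j with hN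
    have hNN : N * N = (2 : ℂ) • N := by
      have h1 : N * N = 1 - M j - M j + M j * M j := by rw [hN]; noncomm_ring
      rw [h1, hM2 j, two_smul ℂ N, hN]
      abel
    set P : Matrix (Fin d → Fin 2) (Fin d → Fin 2) ℂ := (2 : ℂ)⁻¹ • N with hPdef
    have hP : P * P = P := by
      rw [hPdef, smul_mul_smul_comm, hNN, smul_smul]
      norm_num
    have hcN : c • N = (2 * c) • P := by
      rw [hPdef, smul_smul]
      congr 1
      ring
    rw [hcN]; erw [exp_smul_idem P hP (2 * c)]
    have h2c : 2 * c = (Real.pi : ℂ) * Complex.I := by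
      rw [hc]
      push_cast
      ring
    rw [h2c, Complex.exp_pi_mul_I, hPdef, smul_smul]
    norm_num
    rw [hN]
    abel
  -- commuting of the summands
  have hcomm : ∀ j l, Commute (c • (1 - M j)) (c • (1 - M l)) := by
    intro j l
    have h1 : Commute (M j) (1 - M l) := (Commute.one_right (M j)).sub_right (hMM j l)
    have h2 : Commute (1 : Matrix (Fin d → Fin 2) (Fin d → Fin 2) ℂ) (1 - M l) :=
      Commute.one_left _
    exact ((h2.sub_left h1).smul_left c).smul_right c
  -- the key induction
  have key : ∀ s : Finset (Fin d),
      NormedSpace.exp (∑ j ∈ s, c • (1 - M j)) = W (fun k => if k ∈ s then H else 1) := by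
    intro s
    induction s using Finset.induction_on with
    | empty =>
      rw [Finset.sum_empty, NormedSpace.exp_zero, ← W_one]
      exact congrArg W (funext fun k => by simp)
    | @insert a s ha ih =>
      rw [Finset.sum_insert ha]; erw [NormedSpace.exp_add_of_commute
        (Commute.sum_right s _ _ fun l _ => hcomm a l), hexp_single a, ih]
      show W (e a) * _ = _
      rw [W_mul]
      refine congrArg W (funext fun k => ?_)
      by_cases h1 : k = a
      · subst h1
        simp [he, ha]
      · simp [he, h1, Finset.mem_insert]
  rw [smul_smul, ← hc, hLsum, Finset.smul_sum, key Finset.univ]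
  ext x y
  rw [W_apply, hHd]
  exact Finset.prod_congr rfl fun j _ => by rw [if_pos (Finset.mem_univ j)]
end

section
/- Let l be a positive integer, let ε be a real number with 0 < ε and ε² ≤ 1/(4·l), and let S, T be finite subsets of Fin l whose intersection S ∩ T is nonempty. Define x : Fin l → ℝ by: x i = 1 if i ∈ S ∩ T; x i = ε if i ∈ (S ∪ T) but i ∉ S ∩ T; and x i = ε² if i ∉ S ∪ T. Then the probability mass of the indices in S ∩ T under the distribution proportional to the squared entries of x is at least one half: Σ_{i ∈ S ∩ T} (x i)² ≥ (1/2) · Σ_{i ∈ Fin l} (x i)². (This is the key quantitative claim behind the reduction of the set-disjointness problem to sampling from the solution D⁻¹b of a diagonal linear regression, where D has diagonal entries 1 on S and 1/ε off S, and b has entries 1 on T and ε off T.) -/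
/-- The key quantitative claim in the reduction of set-disjointness to sampling from the
solution of a diagonal linear regression (proof of Theorem `thm:Quantum lower bound`):
if `S ∩ T ≠ ∅` then the indices in `S ∩ T` carry at least half of the probability mass of
the distribution proportional to the squared entries of `x`. -/
theorem disjointness_mass_lower_bound
    (l : ℕ) (hl : 0 < l) (ε : ℝ) (hε : 0 < ε) (hε2 : ε ^ 2 ≤ 1 / (4 * l))
    (S T : Finset (Fin l)) (hST : (S ∩ T).Nonempty)
    (x : Fin l → ℝ)
    (hx : ∀ i, x i = if i ∈ S ∩ T then 1 else if i ∈ S ∪ T then ε else ε ^ 2) :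
    (1 / 2) * ∑ i, (x i) ^ 2 ≤ ∑ i ∈ S ∩ T, (x i) ^ 2 := by
  have hlpos : (0:ℝ) < l := by exact_mod_cast hl
  have hε1 : ε ^ 2 ≤ 1 := by
    calc ε ^ 2 ≤ 1 / (4 * l) := hε2
    _ ≤ 1 := by
      rw [div_le_one (by positivity)]
      have : (1:ℝ) ≤ l := by exact_mod_cast hl
      linarith
  have hA : (1:ℝ) ≤ ∑ i ∈ S ∩ T, (x i) ^ 2 := by
    have : ∑ i ∈ S ∩ T, (x i) ^ 2 = (S ∩ T).card := by
      rw [Finset.sum_congr rfl (fun i hi => by rw [hx i, if_pos hi, one_pow]),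
        Finset.sum_const, nsmul_eq_mul, mul_one]
    rw [this]
    exact_mod_cast Finset.card_pos.mpr hST
  have hB : ∑ i ∈ (S ∩ T)ᶜ, (x i) ^ 2 ≤ 1 / 4 := by
    have hterm : ∀ i ∈ (S ∩ T)ᶜ, (x i) ^ 2 ≤ ε ^ 2 := by
      intro i hi
      rw [Finset.mem_compl] at hi
      rw [hx i, if_neg hi]
      split_ifs
      · exact le_refl _
      · nlinarith
    calc ∑ i ∈ (S ∩ T)ᶜ, (x i) ^ 2 ≤ ∑ i ∈ (S ∩ T)ᶜ, ε ^ 2 :=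
          Finset.sum_le_sum hterm
    _ = ((S ∩ T)ᶜ).card * ε ^ 2 := by rw [Finset.sum_const, nsmul_eq_mul]
    _ ≤ l * ε ^ 2 := by
        apply mul_le_mul_of_nonneg_right _ (by positivity)
        exact_mod_cast (Finset.card_le_card (Finset.subset_univ _)).trans
          (le_of_eq (Finset.card_univ.trans (Fintype.card_fin l)))
    _ ≤ l * (1 / (4 * l)) := mul_le_mul_of_nonneg_left hε2 (by positivity)
    _ = 1 / 4 := by field_simp
  have hsplit : ∑ i, (x i) ^ 2 =
      ∑ i ∈ S ∩ T, (x i) ^ 2 + ∑ i ∈ (S ∩ T)ᶜ, (x i) ^ 2 :=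
    (Finset.sum_add_sum_compl (S ∩ T) _).symm
  rw [hsplit]
  linarith
end

section
/- Let q and n be positive integers, let α > 0, let A be an n×n complex matrix, and let U be an (α, q, 0) block-encoding of A. Let Uᴴ denote the conjugate transpose of U and Aᴴ that of A. Then the block matrix Ũ = fromBlocks 0 U Uᴴ 0, indexed by (Fin 2^q × Fin n) ⊕ (Fin 2^q × Fin n), is unitary, and it block-encodes the Hermitian dilation of A with the same factor α: for all x, y ∈ Fin n, α · Ũ (inl (0,x)) (inr (0,y)) = A x y, α · Ũ (inr (0,x)) (inl (0,y)) = Aᴴ x y, and Ũ (inl (0,x)) (inl (0,y)) = 0 = Ũ (inr (0,x)) (inr (0,y)); that is, extracting the ancilla-zero entries of Ũ yields α⁻¹ times the matrix fromBlocks 0 A Aᴴ 0. -/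
open Matrix

/-- The Hermitian dilation of a block-encoding (used in the proof of Theorem
`thm:solve the general linear regression`): if `U` is an `(α, q, 0)` block-encoding of `A`,
then `fromBlocks 0 U Uᴴ 0` is unitary and is an `(α, q, 0)` block-encoding of
`fromBlocks 0 A Aᴴ 0`. -/
theorem hermitian_dilation_block_encoding
    (q n : ℕ) (hq : 0 < q) (hn : 0 < n) (α : ℝ) (hα : 0 < α)
    (A : Matrix (Fin n) (Fin n) ℂ)
    (U : Matrix (Fin (2 ^ q) × Fin n) (Fin (2 ^ q) × Fin n) ℂ)
    (hU : U ∈ Matrix.unitaryGroup (Fin (2 ^ q) × Fin n) ℂ)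
    (hBE : ∀ x y : Fin n, A x y = (α : ℂ) * U (0, x) (0, y)) :
    Matrix.fromBlocks 0 U Uᴴ 0 ∈
        Matrix.unitaryGroup ((Fin (2 ^ q) × Fin n) ⊕ (Fin (2 ^ q) × Fin n)) ℂ ∧
      (∀ x y : Fin n,
        (α : ℂ) * Matrix.fromBlocks 0 U Uᴴ 0 (Sum.inl (0, x)) (Sum.inr (0, y)) = A x y) ∧
      (∀ x y : Fin n,
        (α : ℂ) * Matrix.fromBlocks 0 U Uᴴ 0 (Sum.inr (0, x)) (Sum.inl (0, y)) = Aᴴ x y) ∧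
      (∀ x y : Fin n,
        Matrix.fromBlocks 0 U Uᴴ 0 (Sum.inl (0, x)) (Sum.inl (0, y)) = 0 ∧
        Matrix.fromBlocks 0 U Uᴴ 0 (Sum.inr (0, x)) (Sum.inr (0, y)) = 0) := by
  have hU1 : U * Uᴴ = 1 := Matrix.mem_unitaryGroup_iff.mp hU
  have hU2 : Uᴴ * U = 1 := Matrix.mem_unitaryGroup_iff'.mp hU
  refine ⟨?_, ?_, ?_, ?_⟩
  · rw [Matrix.mem_unitaryGroup_iff]
    show _ * (Matrix.fromBlocks 0 U Uᴴ 0)ᴴ = 1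
    rw [Matrix.fromBlocks_conjTranspose, Matrix.fromBlocks_multiply]
    simp [hU1, hU2, Matrix.fromBlocks_one]
  · intro x y; simp [hBE]
  · intro x y; simp [Matrix.conjTranspose_apply, hBE, _root_.map_mul]
  · intro x y; simp
end
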